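/- arXiv:math/0410334 — 2 statements merged into one kernel-verified Lean document; each statement's English description precedes it below -/
import Mathlib

section
/- Let Λ ⊆ Z^n be a sublattice on which the projection π to the first d coordinates is injective, and let u, v ∈ Λ with u ⊑ v and u ≠ v. Then ‖π(u)‖_1 < ‖π(v)‖_1. -/
/-- `Sq u v` means `u ⊑ v`: `u j * v j ≥ 0` and `|u j| ≤ |v j|` for all `j`. -/
def Sq {n : ℕ} (u v : Fin n → ℤ) : Prop :=
  ∀ j, 0 ≤ u j * v j ∧ |u j| ≤ |v j|

/-- the L1 norm on `ℤ^d`. -/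
def norm1 {d : ℕ} (u : Fin d → ℤ) : ℤ := ∑ j, |u j|

/-- projection of a vector in `ℤ^n` onto its first `d` components. -/
def proj {n d : ℕ} (hd : d ≤ n) (v : Fin n → ℤ) : Fin d → ℤ :=
  fun j => v (Fin.castLE hd j)

theorem sq_proj_norm_lt {n d : ℕ} (hd : d ≤ n) (Λ : AddSubgroup (Fin n → ℤ))
    (hinj : ∀ v ∈ Λ, proj hd v = 0 → v = 0)
    (u v : Fin n → ℤ) (hu : u ∈ Λ) (hv : v ∈ Λ)
    (hsq : Sq u v) (hne : u ≠ v) :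
    norm1 (proj hd u) < norm1 (proj hd v) := by
  have hle : norm1 (proj hd u) ≤ norm1 (proj hd v) :=
    Finset.sum_le_sum fun j _ => (hsq (Fin.castLE hd j)).2
  rcases lt_or_eq_of_le hle with h | h
  · exact h
  · exfalso
    -- all abs equal on first d coords
    have habs : ∀ j : Fin d, |proj hd u j| = |proj hd v j| := by
      intro j
      have h' : ∑ j : Fin d, |u (Fin.castLE hd j)| = ∑ j : Fin d, |v (Fin.castLE hd j)| := h
      exact (Finset.sum_eq_sum_iff_of_le
        (fun j _ => (hsq (Fin.castLE hd j)).2)).mp h' j (Finset.mem_univ j)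
    have heq : ∀ j : Fin d, u (Fin.castLE hd j) = v (Fin.castLE hd j) := by
      intro j
      have h1 := (hsq (Fin.castLE hd j)).1
      have h2 := habs j
      simp only [proj] at h2
      rcases abs_eq_abs.mp h2 with h3 | h3
      · exact h3
      · -- u j = -v j and u j * v j ≥ 0 force u j = v j = 0
        rw [h3] at h1 ⊢
        nlinarith [sq_nonneg (v (Fin.castLE hd j))]
    have hmem : v - u ∈ Λ := sub_mem hv hu
    have hproj : proj hd (v - u) = 0 := by
      funext j
      simp [proj, heq j]
    have := hinj _ hmem hproj
    exact hne (sub_eq_zero.mp this).symm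
end

section
/- Every nonzero element v of a sublattice Λ ⊆ Z^n can be written as a finite sum v = g_1 + ... + g_r of Graver basis elements g_i ∈ G(Λ) with g_i ⊑ v for all i (the positive sum property). -/
/-- Graver basis: the ⊑-minimal nonzero elements of `Λ`. -/
def Graver {n : ℕ} (Λ : AddSubgroup (Fin n → ℤ)) : Set (Fin n → ℤ) :=
  {v | v ∈ Λ ∧ v ≠ 0 ∧ ∀ w ∈ Λ, w ≠ 0 → w ≠ v → ¬ Sq w v}

private lemma coord (a b : ℤ) (h1 : 0 ≤ a * b) (h2 : |a| ≤ |b|) :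
    0 ≤ (b - a) * b ∧ |b - a| ≤ |b| ∧ |a| + |b - a| = |b| := by
  rcases lt_trichotomy a 0 with ha | ha | ha
  · have hb : b ≤ 0 := by nlinarith
    rw [abs_of_neg ha, abs_of_nonpos hb] at h2
    have hba : b - a ≤ 0 := by omega
    refine ⟨by nlinarith, ?_, ?_⟩ <;>
      simp only [abs_of_neg ha, abs_of_nonpos hb, abs_of_nonpos hba] <;> omega
  · subst ha
    simpa using mul_self_nonneg b
  · have hb : 0 ≤ b := by nlinarith
    rw [abs_of_pos ha, abs_of_nonneg hb] at h2
    have hba : 0 ≤ b - a := by omega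
    refine ⟨mul_nonneg hba hb, ?_, ?_⟩ <;>
      simp only [abs_of_pos ha, abs_of_nonneg hb, abs_of_nonneg hba] <;> omega

private lemma sq_trans {n : ℕ} {u w v : Fin n → ℤ} (h1 : Sq u w) (h2 : Sq w v) : Sq u v := by
  intro j
  obtain ⟨p1, q1⟩ := h1 j
  obtain ⟨p2, q2⟩ := h2 j
  refine ⟨?_, le_trans q1 q2⟩
  rcases eq_or_ne (w j) 0 with hw | hw
  · have : u j = 0 := by rw [hw] at q1; simpa using q1
    simp [this]
  · have hw2 : 0 < w j * w j := mul_self_pos.mpr hw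
    nlinarith [mul_nonneg p1 p2]

private lemma aux {n : ℕ} (Λ : AddSubgroup (Fin n → ℤ)) :
    ∀ N : ℕ, ∀ v : Fin n → ℤ, v ∈ Λ → v ≠ 0 → (∑ j, (v j).natAbs) ≤ N →
    ∃ l : List (Fin n → ℤ), l ≠ [] ∧ (∀ g ∈ l, g ∈ Graver Λ ∧ Sq g v) ∧ l.sum = v := by
  intro N
  induction N with
  | zero =>
    intro v hv hv0 hN
    exfalso
    apply hv0
    funext j
    have : (v j).natAbs = 0 := by
      have := Finset.sum_eq_zero_iff.mp (Nat.le_zero.mp hN) j (Finset.mem_univ j)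
      exact this
    simp only [Pi.zero_apply]
    omega
  | succ N ih =>
    intro v hv hv0 hN
    by_cases hG : v ∈ Graver Λ
    · exact ⟨[v], by simp, by
        intro g hg
        simp only [List.mem_singleton] at hg
        subst hg
        exact ⟨hG, fun j => ⟨mul_self_nonneg _, le_refl _⟩⟩, by simp⟩
    · have : ∃ w ∈ Λ, w ≠ 0 ∧ w ≠ v ∧ Sq w v := by
        by_contra hc
        push_neg at hc
        exact hG ⟨hv, hv0, fun w hw hw0 hwv => hc w hw hw0 hwv⟩
      obtain ⟨w, hwΛ, hw0, hwv, hSq⟩ := this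
      have hc := fun j => coord (w j) (v j) (hSq j).1 (hSq j).2
      have hvw0 : v - w ≠ 0 := by
        intro h
        exact hwv (by funext j; have := congrFun h j; simp at this; omega)
      have hvwΛ : v - w ∈ Λ := sub_mem hv hwΛ
      have hsplit : (∑ j, (w j).natAbs) + (∑ j, ((v - w) j).natAbs) = ∑ j, (v j).natAbs := by
        rw [← Finset.sum_add_distrib]
        apply Finset.sum_congr rfl
        intro j _
        have := (hc j).2.2
        simp only [Int.abs_eq_natAbs] at this
        simp only [Pi.sub_apply]
        omega
      have hwpos : 0 < ∑ j, (w j).natAbs := by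
        by_contra h
        push_neg at h
        apply hw0
        funext j
        have := Finset.sum_eq_zero_iff.mp (Nat.le_zero.mp h) j (Finset.mem_univ j)
        simp only [Pi.zero_apply]
        omega
      have hvwpos : 0 < ∑ j, ((v - w) j).natAbs := by
        by_contra h
        push_neg at h
        apply hvw0
        funext j
        have := Finset.sum_eq_zero_iff.mp (Nat.le_zero.mp h) j (Finset.mem_univ j)
        simp only [Pi.zero_apply]
        omega
      have hSq2 : Sq (v - w) v := by
        intro j
        exact ⟨(hc j).1, (hc j).2.1⟩
      obtain ⟨l1, hl1ne, hl1, hl1s⟩ := ih w hwΛ hw0 (by omega)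
      obtain ⟨l2, hl2ne, hl2, hl2s⟩ := ih (v - w) hvwΛ hvw0 (by omega)
      refine ⟨l1 ++ l2, by simp [hl1ne], ?_, by simp [hl1s, hl2s]⟩
      intro g hg
      rcases List.mem_append.mp hg with h | h
      · exact ⟨(hl1 g h).1, sq_trans (hl1 g h).2 hSq⟩
      · exact ⟨(hl2 g h).1, sq_trans (hl2 g h).2 hSq2⟩

theorem positive_sum_property {n : ℕ} (Λ : AddSubgroup (Fin n → ℤ))
    (v : Fin n → ℤ) (hv : v ∈ Λ) (hv0 : v ≠ 0) :
    ∃ l : List (Fin n → ℤ), l ≠ [] ∧ (∀ g ∈ l, g ∈ Graver Λ ∧ Sq g v) ∧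
      l.sum = v := by
  exact aux Λ (∑ j, (v j).natAbs) v hv hv0 le_rfl
end
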